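/- arXiv:1602.04728 — 9 statements merged into one kernel-verified Lean document; each statement's English description precedes it below -/
import Mathlib

section
/- Let s > 0, A ∈ ℝ, and c ≥ s². Suppose φ : ℝ → ℝ is a continuous 1-periodic function such that ∫₀¹ φ(y) dy = s and φ(y)² − A φ(y) sin(2πy) = c for every y ∈ ℝ. Then A = 0. -/
/-- If `φ : ℝ → ℝ` is continuous, `1`-periodic, has mean `s > 0` over a
period, and satisfies `φ(y)² − A φ(y) sin(2πy) = c` for every `y`, with `c ≥ s²`,
then `A = 0`. -/
theorem statement1 (s A c : ℝ) (hs : 0 < s) (hc : s ^ 2 ≤ c)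
    (φ : ℝ → ℝ) (hcont : Continuous φ) (hper : Function.Periodic φ 1)
    (hmean : (∫ y in (0:ℝ)..1, φ y) = s)
    (heq : ∀ y : ℝ, φ y ^ 2 - A * φ y * Real.sin (2 * Real.pi * y) = c) :
    A = 0 := by
  by_contra hA
  have hcpos : 0 < c := lt_of_lt_of_le (pow_pos hs 2) hc
  -- φ is never zero
  have hφne : ∀ y, φ y ≠ 0 := by
    intro y h0
    have := heq y
    rw [h0] at this
    simp at this
    nlinarith
  -- φ is positive somewhere
  have hzex : ∃ z, 0 < φ z := by
    by_contra h
    push_neg at h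
    have : (∫ y in (0:ℝ)..1, φ y) ≤ 0 := by
      have : (0:ℝ) ≤ ∫ y in (0:ℝ)..1, (-φ) y :=
        intervalIntegral.integral_nonneg (by norm_num) (fun u _ => by
          simpa using h u)
      have h2 : (∫ y in (0:ℝ)..1, (-φ) y) = -∫ y in (0:ℝ)..1, φ y := by
        simp [intervalIntegral.integral_neg]
      linarith [h2 ▸ this]
    linarith [hmean ▸ this]
  obtain ⟨z, hz⟩ := hzex
  -- φ is everywhere positive (IVT)
  have hφpos : ∀ y, 0 < φ y := by
    intro y
    rcases lt_or_gt_of_ne (hφne y) with hneg | hpos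
    · exfalso
      have hsub := intermediate_value_uIcc (a := y) (b := z) (f := φ) hcont.continuousOn
      have h0mem : (0:ℝ) ∈ Set.uIcc (φ y) (φ z) := by
        rw [Set.mem_uIcc]; left; exact ⟨hneg.le, hz.le⟩
      obtain ⟨w, _, hw⟩ := hsub h0mem
      exact hφne w hw
    · exact hpos
  -- pointwise formula lower bound
  have key : ∀ y, A * Real.sin (2 * Real.pi * y) / 2 + Real.sqrt c ≤ φ y := by
    intro y
    set a := A * Real.sin (2 * Real.pi * y) with ha
    have heqy : φ y ^ 2 - a * φ y = c := by rw [ha]; linear_combination heq y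
    have h1 : (φ y - a/2)^2 = c + a^2/4 := by linear_combination heqy
    have hr : (0:ℝ) ≤ c + a^2/4 := by positivity
    have habs : |φ y - a/2| = Real.sqrt (c + a^2/4) := by
      rw [← Real.sqrt_sq_eq_abs, h1]
    have hrgt : |a/2| < Real.sqrt (c + a^2/4) := by
      rw [← Real.sqrt_sq_eq_abs]
      apply Real.sqrt_lt_sqrt (by positivity)
      nlinarith
    have hcase : φ y - a/2 = Real.sqrt (c + a^2/4) := by
      rcases abs_eq (Real.sqrt_nonneg _) |>.mp habs with h | h
      · exact h
      · exfalso
        have : φ y = a/2 - Real.sqrt (c + a^2/4) := by linarith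
        have h2 : a/2 ≤ |a/2| := le_abs_self _
        have := hφpos y
        linarith
    have hsq : Real.sqrt c ≤ Real.sqrt (c + a^2/4) :=
      Real.sqrt_le_sqrt (by nlinarith)
    linarith
  -- strict inequality at y = 1/4
  have hstrict : A * Real.sin (2 * Real.pi * (1/4 : ℝ)) / 2 + Real.sqrt c < φ (1/4) := by
    have hsin : Real.sin (2 * Real.pi * (1/4 : ℝ)) = 1 := by
      norm_num
      rw [show (2:ℝ) * Real.pi * (1/4) = Real.pi / 2 by ring]
      exact Real.sin_pi_div_two
    set a := A * Real.sin (2 * Real.pi * (1/4:ℝ)) with ha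
    have hane : a ≠ 0 := by rw [ha, hsin]; simpa using hA
    have heqy : φ (1/4) ^ 2 - a * φ (1/4) = c := by rw [ha]; linear_combination heq (1/4)
    have h1 : (φ (1/4) - a/2)^2 = c + a^2/4 := by linear_combination heqy
    have habs : |φ (1/4) - a/2| = Real.sqrt (c + a^2/4) := by
      rw [← Real.sqrt_sq_eq_abs, h1]
    have hcase : φ (1/4) - a/2 = Real.sqrt (c + a^2/4) := by
      rcases abs_eq (Real.sqrt_nonneg _) |>.mp habs with h | h
      · exact h
      · exfalso
        have hrgt : |a/2| < Real.sqrt (c + a^2/4) := by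
          rw [← Real.sqrt_sq_eq_abs]
          apply Real.sqrt_lt_sqrt (by positivity)
          nlinarith
        have h2 : a/2 ≤ |a/2| := le_abs_self _
        have := hφpos (1/4)
        linarith
    have hsq : Real.sqrt c < Real.sqrt (c + a^2/4) := by
      apply Real.sqrt_lt_sqrt hcpos.le
      have h2 : 0 < a^2 := by positivity
      linarith
    linarith
  -- integral of sin(2πy) over [0,1] is 0
  have hsinint : (∫ y in (0:ℝ)..1, Real.sin (2 * Real.pi * y)) = 0 := by
    have h := intervalIntegral.integral_comp_mul_left (a := (0:ℝ)) (b := 1)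
      (fun x => Real.sin x) (c := 2 * Real.pi) (by positivity)
    rw [h]
    simp [integral_sin, Real.cos_two_pi]
  -- lower bound function is continuous and integrable
  set g : ℝ → ℝ := fun y => A * Real.sin (2 * Real.pi * y) / 2 + Real.sqrt c with hg
  have hgcont : Continuous g := by
    apply Continuous.add _ continuous_const
    exact (continuous_const.mul ((Real.continuous_sin.comp (continuous_const.mul continuous_id)))).div_const 2
  have hgint : (∫ y in (0:ℝ)..1, g y) = Real.sqrt c := by
    rw [hg]
    rw [intervalIntegral.integral_add _ (intervalIntegrable_const)]
    · rw [show (fun y => A * Real.sin (2 * Real.pi * y) / 2) = (fun y => (A/2) * Real.sin (2 * Real.pi * y)) from funext fun y => by ring]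
      rw [intervalIntegral.integral_const_mul, hsinint]
      simp
    · apply Continuous.intervalIntegrable
      exact (continuous_const.mul ((Real.continuous_sin.comp (continuous_const.mul continuous_id)))).div_const 2
  -- strict integral inequality
  have hlt : (∫ y in (0:ℝ)..1, g y) < ∫ y in (0:ℝ)..1, φ y := by
    apply intervalIntegral.integral_lt_integral_of_continuousOn_of_le_of_exists_lt
      (by norm_num) hgcont.continuousOn hcont.continuousOn
    · intro x _; exact key x
    · exact ⟨1/4, by norm_num, hstrict⟩
  rw [hgint, hmean] at hlt
  have hsc : s ≤ Real.sqrt c := by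
    rw [show s = Real.sqrt (s^2) by rw [Real.sqrt_sq hs.le]]
    exact Real.sqrt_le_sqrt hc
  linarith
end

section
/- Let n ≥ 1 and let H : ℝⁿ → ℝ be convex with H(0) = 0 and H(p) ≥ |p|² for all p ∈ ℝⁿ. Define α(p) := inf_{λ>0} (1 + H(λp))/λ. Then α is convex on ℝⁿ, α(0) = 0, α(sp) = s·α(p) for all s > 0 and all p ∈ ℝⁿ, and α(p) ≥ 2|p| for all p ∈ ℝⁿ. -/
/-!
Writing `a = 1/λ`, the quotient `(1 + H(λp))/λ` is the perspective `a (1 + H(a⁻¹ p))` of the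
convex function `1 + H`, and perspectives of convex functions are subadditive:
`(a + b) H((a + b)⁻¹ (x + y)) ≤ a H(a⁻¹ x) + b H(b⁻¹ y)`. Taking infima makes `α` subadditive.
Reparametrising `λ ↦ λ s` shows that `α` is positively homogeneous, and a subadditive,
positively homogeneous function is convex. The lower bound is AM–GM:
`1 + λ²|p|² ≥ 2λ|p|`.
-/

/-- The effective burning velocity associated with an effective Hamiltonian `H`:
`α(p) = inf_{λ > 0} (1 + H(λ p)) / λ`. -/
noncomputable def effAlpha {n : ℕ} (H : EuclideanSpace ℝ (Fin n) → ℝ)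
    (p : EuclideanSpace ℝ (Fin n)) : ℝ :=
  sInf {y : ℝ | ∃ l : ℝ, 0 < l ∧ (1 + H (l • p)) / l = y}

open Set

theorem convexOn_univ_of_add_le_of_smul_le {𝕜 E : Type*} [Semiring 𝕜] [PartialOrder 𝕜]
    [IsOrderedRing 𝕜] [AddCommMonoid E] [Module 𝕜 E] {f : E → 𝕜}
    (hadd : ∀ x y, f (x + y) ≤ f x + f y) (hsmul : ∀ c x, 0 ≤ c → f (c • x) ≤ c * f x) :
    ConvexOn 𝕜 univ f :=
  ⟨convex_univ, fun _ _ _ _ _ _ ha hb _ =>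
    (hadd _ _).trans (add_le_add (hsmul _ _ ha) (hsmul _ _ hb))⟩

theorem ConvexOn.perspective_add_le {E : Type*} [AddCommGroup E] [Module ℝ E] {H : E → ℝ}
    (hH : ConvexOn ℝ univ H) {a b : ℝ} (ha : 0 < a) (hb : 0 < b) (x y : E) :
    (a + b) * H ((a + b)⁻¹ • (x + y)) ≤ a * H (a⁻¹ • x) + b * H (b⁻¹ • y) := by
  have hab : 0 < a + b := by positivity
  have hpoint : (a + b)⁻¹ • (x + y) = (a / (a + b)) • (a⁻¹ • x) + (b / (a + b)) • (b⁻¹ • y) := by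
    have hx : a / (a + b) * a⁻¹ = (a + b)⁻¹ := by field_simp
    have hy : b / (a + b) * b⁻¹ = (a + b)⁻¹ := by field_simp
    rw [smul_smul, smul_smul, hx, hy, smul_add]
  have hconv := hH.2 (mem_univ (a⁻¹ • x)) (mem_univ (b⁻¹ • y)) (by positivity : 0 ≤ a / (a + b))
    (by positivity : 0 ≤ b / (a + b)) (by field_simp)
  rw [← hpoint, smul_eq_mul, smul_eq_mul] at hconv
  calc (a + b) * H ((a + b)⁻¹ • (x + y))
      ≤ (a + b) * (a / (a + b) * H (a⁻¹ • x) + b / (a + b) * H (b⁻¹ • y)) := by gcongr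
    _ = a * H (a⁻¹ • x) + b * H (b⁻¹ • y) := by field_simp

section effAlpha

variable {n : ℕ} {H : EuclideanSpace ℝ (Fin n) → ℝ}

theorem le_effAlpha {c : ℝ} {p : EuclideanSpace ℝ (Fin n)}
    (h : ∀ l, 0 < l → c ≤ (1 + H (l • p)) / l) : c ≤ effAlpha H p :=
  le_csInf ⟨_, 1, one_pos, rfl⟩ (by rintro _ ⟨l, hl, rfl⟩; exact h l hl)

theorem effAlpha_le (hH : ∀ q, 0 ≤ H q) (p : EuclideanSpace ℝ (Fin n)) {l : ℝ} (hl : 0 < l) :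
    effAlpha H p ≤ (1 + H (l • p)) / l :=
  csInf_le ⟨0, by rintro _ ⟨m, hm, rfl⟩; have := hH (m • p); positivity⟩ ⟨l, hl, rfl⟩

theorem effAlpha_zero (h0 : H 0 = 0) (hH : ∀ q, 0 ≤ H q) : effAlpha H 0 = 0 := by
  refine le_antisymm (le_of_forall_gt_imp_ge_of_dense fun ε hε => ?_)
    (le_effAlpha fun l hl => by simp only [smul_zero, h0, add_zero]; positivity)
  simpa [h0] using effAlpha_le hH 0 (inv_pos.2 hε)

theorem effAlpha_smul {s : ℝ} (hs : 0 < s) (p : EuclideanSpace ℝ (Fin n)) :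
    effAlpha H (s • p) = s * effAlpha H p := by
  rw [effAlpha, effAlpha, ← smul_eq_mul, ← Real.sInf_smul_of_nonneg hs.le]
  congr 1
  ext y
  simp only [mem_ofPred_eq, mem_smul_set, smul_eq_mul]
  constructor
  · rintro ⟨l, hl, rfl⟩
    refine ⟨_, ⟨l * s, mul_pos hl hs, rfl⟩, ?_⟩
    rw [smul_smul]
    field_simp
  · rintro ⟨_, ⟨m, hm, rfl⟩, rfl⟩
    refine ⟨m / s, div_pos hm hs, ?_⟩
    rw [smul_smul, div_mul_cancel₀ _ hs.ne']
    field_simp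

theorem effAlpha_add_le (hconv : ConvexOn ℝ univ H) (hH : ∀ q, 0 ≤ H q)
    (x y : EuclideanSpace ℝ (Fin n)) : effAlpha H (x + y) ≤ effAlpha H x + effAlpha H y := by
  have hsplit : ∀ l m, 0 < l → 0 < m →
      effAlpha H (x + y) ≤ (1 + H (l • x)) / l + (1 + H (m • y)) / m := by
    intro l m hl hm
    have hperp := hconv.perspective_add_le (inv_pos.2 hl) (inv_pos.2 hm) x y
    rw [inv_inv, inv_inv] at hperp
    calc effAlpha H (x + y)
        ≤ (1 + H ((l⁻¹ + m⁻¹)⁻¹ • (x + y))) / (l⁻¹ + m⁻¹)⁻¹ := effAlpha_le hH _ (by positivity)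
      _ = (l⁻¹ + m⁻¹) + (l⁻¹ + m⁻¹) * H ((l⁻¹ + m⁻¹)⁻¹ • (x + y)) := by
        rw [div_inv_eq_mul]; ring
      _ ≤ (l⁻¹ + m⁻¹) + (l⁻¹ * H (l • x) + m⁻¹ * H (m • y)) := by gcongr
      _ = (1 + H (l • x)) / l + (1 + H (m • y)) / m := by ring
  have hx : ∀ m, 0 < m → effAlpha H (x + y) - (1 + H (m • y)) / m ≤ effAlpha H x :=
    fun m hm => le_effAlpha fun l hl => by linarith [hsplit l m hl hm]
  have hy : effAlpha H (x + y) - effAlpha H x ≤ effAlpha H y :=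
    le_effAlpha fun m hm => by linarith [hx m hm]
  linarith

theorem two_mul_norm_le_effAlpha (hgrow : ∀ p, H p ≥ ‖p‖ ^ 2) (p : EuclideanSpace ℝ (Fin n)) :
    2 * ‖p‖ ≤ effAlpha H p := by
  refine le_effAlpha fun l hl => ?_
  have hH := hgrow (l • p)
  rw [norm_smul, Real.norm_of_nonneg hl.le] at hH
  rw [le_div_iff₀ hl]
  nlinarith [sq_nonneg (l * ‖p‖ - 1)]

end effAlpha

theorem statement3_general {n : ℕ} (H : EuclideanSpace ℝ (Fin n) → ℝ)
    (hconv : ConvexOn ℝ Set.univ H) (h0 : H 0 = 0)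
    (hgrow : ∀ p, H p ≥ ‖p‖ ^ 2) :
    ConvexOn ℝ Set.univ (effAlpha H) ∧ effAlpha H 0 = 0 ∧
      (∀ s : ℝ, 0 < s → ∀ p, effAlpha H (s • p) = s * effAlpha H p) ∧
      (∀ p, effAlpha H p ≥ 2 * ‖p‖) := by
  have hH : ∀ p, 0 ≤ H p := fun p => (sq_nonneg _).trans (hgrow p)
  have hsmul : ∀ c p, 0 ≤ c → effAlpha H (c • p) ≤ c * effAlpha H p := by
    intro c p hc
    rcases hc.eq_or_lt with rfl | hc
    · simp [effAlpha_zero h0 hH]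
    · exact (effAlpha_smul hc p).le
  exact ⟨convexOn_univ_of_add_le_of_smul_le (effAlpha_add_le hconv hH) hsmul,
    effAlpha_zero h0 hH, fun s hs p => effAlpha_smul hs p, two_mul_norm_le_effAlpha hgrow⟩

/-- If `H : ℝⁿ → ℝ` is convex with `H(0) = 0` and `H(p) ≥ |p|²`, then
`α(p) := inf_{λ>0}(1 + H(λp))/λ` is convex, vanishes at `0`, is positively homogeneous
of degree one, and satisfies `α(p) ≥ 2|p|`. -/
theorem statement3 {n : ℕ} (hn : 1 ≤ n) (H : EuclideanSpace ℝ (Fin n) → ℝ)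
    (hconv : ConvexOn ℝ Set.univ H) (h0 : H 0 = 0)
    (hgrow : ∀ p, H p ≥ ‖p‖ ^ 2) :
    ConvexOn ℝ Set.univ (effAlpha H) ∧ effAlpha H 0 = 0 ∧
      (∀ s : ℝ, 0 < s → ∀ p, effAlpha H (s • p) = s * effAlpha H p) ∧
      (∀ p, effAlpha H p ≥ 2 * ‖p‖) :=
  statement3_general H hconv h0 hgrow
end

section
/- Let n ≥ 1 and let H : ℝⁿ → ℝ be convex with H(0) = 0 and H(p) ≥ |p|² for all p ∈ ℝⁿ, and assume H is radially strictly convex. Then for every p ∈ ℝⁿ \ {0} there exists a unique λ_p > 0 such that (1 + H(λ_p p))/λ_p = inf_{λ>0} (1 + H(λp))/λ. -/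
/-- `H` is radially strictly convex: whenever `H` is affine on a segment `[p₁, p₂]`
with `H(p₂) > 0`, it is constant on that segment. -/
def RadStrictConvex {n : ℕ} (H : EuclideanSpace ℝ (Fin n) → ℝ) : Prop :=
  ∀ p₁ p₂ : EuclideanSpace ℝ (Fin n),
    (∀ s ∈ Set.Icc (0:ℝ) 1,
      H ((1 - s) • p₁ + s • p₂) = (1 - s) * H p₁ + s * H p₂) →
    0 < H p₂ →
    ∀ s ∈ Set.Icc (0:ℝ) 1, H ((1 - s) • p₁ + s • p₂) = H p₂

open Set Filter Topology

theorem exists_isMinOn_Ioi_of_tendsto_atTop {f : ℝ → ℝ} (hf : ContinuousOn f (Ioi 0))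
    (h0 : Tendsto f (𝓝[>] 0) atTop) (htop : Tendsto f atTop atTop) :
    ∃ x ∈ Ioi 0, IsMinOn f (Ioi 0) x := by
  obtain ⟨a, ha, hfa⟩ : ∃ a > 0, Ioo 0 a ⊆ {x | f 1 < f x} :=
    mem_nhdsGT_iff_exists_Ioo_subset.1 (h0.eventually_gt_atTop (f 1))
  obtain ⟨b, hfb⟩ := eventually_atTop.1 (htop.eventually_gt_atTop (f 1))
  have hK : Icc (min a 1) (max b 1) ⊆ Ioi 0 := fun x hx =>
    (lt_min ha one_pos).trans_le hx.1
  have h1K : (1 : ℝ) ∈ Icc (min a 1) (max b 1) := ⟨min_le_right _ _, le_max_right _ _⟩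
  obtain ⟨x, hxK, hxmin⟩ := isCompact_Icc.exists_isMinOn ⟨1, h1K⟩ (hf.mono hK)
  refine ⟨x, hK hxK, fun y (hy : 0 < y) => ?_⟩
  by_cases hyK : y ∈ Icc (min a 1) (max b 1)
  · exact hxmin hyK
  have hf1y : f 1 < f y := by
    rcases not_and_or.1 hyK with hlow | hhigh
    · exact hfa ⟨hy, (not_le.1 hlow).trans_le (min_le_left _ _)⟩
    · exact hfb y ((le_max_left _ _).trans (not_le.1 hhigh).le)
  exact (hxmin h1K).trans hf1y.le

namespace BurningVelocity

variable {n : ℕ} (H : EuclideanSpace ℝ (Fin n) → ℝ) (p : EuclideanSpace ℝ (Fin n))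

noncomputable def ratio (l : ℝ) : ℝ := (1 + H (l • p)) / l

theorem effAlpha_eq_sInf_image : effAlpha H p = sInf (ratio H p '' Ioi 0) := rfl

variable {H p}

theorem effAlpha_eq_of_isMinOn {l : ℝ} (hl : 0 < l) (hmin : IsMinOn (ratio H p) (Ioi 0) l) :
    effAlpha H p = ratio H p l := by
  rw [effAlpha_eq_sInf_image]
  exact IsLeast.csInf_eq ⟨mem_image_of_mem _ hl, forall_mem_image.2 hmin⟩

theorem continuousOn_ratio (hH : Continuous H) : ContinuousOn (ratio H p) (Ioi 0) :=
  ((continuous_const.add (hH.comp (continuous_id.smul continuous_const))).continuousOn).div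
    continuousOn_id fun _ hl => ne_of_gt hl

theorem tendsto_ratio_nhdsGT_zero (hH : ∀ q, 0 ≤ H q) : Tendsto (ratio H p) (𝓝[>] 0) atTop := by
  refine tendsto_atTop_mono' _ ?_ tendsto_inv_nhdsGT_zero
  filter_upwards [self_mem_nhdsWithin] with l (hl : 0 < l)
  rw [ratio, inv_eq_one_div]
  gcongr
  linarith [hH (l • p)]

theorem tendsto_ratio_atTop (hgrow : ∀ q, ‖q‖ ^ 2 ≤ H q) (hp : p ≠ 0) :
    Tendsto (ratio H p) atTop atTop := by
  have hp2 : 0 < ‖p‖ ^ 2 := by positivity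
  refine tendsto_atTop_mono' _ ?_ (tendsto_id.atTop_mul_const hp2)
  filter_upwards [eventually_gt_atTop 0] with l hl
  have hHl : l ^ 2 * ‖p‖ ^ 2 ≤ H (l • p) := by
    simpa [norm_smul, mul_pow] using hgrow (l • p)
  rw [ratio, le_div_iff₀ hl, id]
  nlinarith

theorem ratio_eq_of_isMinOn {l₁ l₂ : ℝ} (hl₁ : 0 < l₁) (hl₂ : 0 < l₂)
    (hmin₁ : IsMinOn (ratio H p) (Ioi 0) l₁) (hmin₂ : IsMinOn (ratio H p) (Ioi 0) l₂) :
    ratio H p l₁ = ratio H p l₂ :=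
  le_antisymm (hmin₁ hl₂) (hmin₂ hl₁)

theorem affine_on_segment_of_isMinOn (hconv : ConvexOn ℝ univ H) {l₁ l₂ : ℝ} (hl₁ : 0 < l₁)
    (hl₂ : 0 < l₂) (hmin₁ : IsMinOn (ratio H p) (Ioi 0) l₁)
    (hmin₂ : IsMinOn (ratio H p) (Ioi 0) l₂) :
    ∀ s ∈ Icc (0 : ℝ) 1, H ((1 - s) • (l₁ • p) + s • (l₂ • p)) =
      (1 - s) * H (l₁ • p) + s * H (l₂ • p) := by
  rintro s ⟨hs0, hs1⟩
  set m := ratio H p l₁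
  have hm₁ : 1 + H (l₁ • p) = m * l₁ := by simp only [m, ratio]; field_simp
  have hm₂ : 1 + H (l₂ • p) = m * l₂ := by
    simp only [m, ratio_eq_of_isMinOn hl₁ hl₂ hmin₁ hmin₂, ratio]; field_simp
  set l := (1 - s) * l₁ + s * l₂
  have hl : 0 < l := convex_Ioi (0 : ℝ) hl₁ hl₂ (sub_nonneg.2 hs1) hs0 (sub_add_cancel 1 s)
  have hpt : (1 - s) • (l₁ • p) + s • (l₂ • p) = l • p := by
    rw [smul_smul, smul_smul, add_smul]
  have hconv_le : H (l • p) ≤ (1 - s) * H (l₁ • p) + s * H (l₂ • p) := by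
    simpa only [hpt, smul_eq_mul] using
      hconv.2 (mem_univ (l₁ • p)) (mem_univ (l₂ • p)) (sub_nonneg.2 hs1) hs0 (by ring)
  have hmin_le : m * l ≤ 1 + H (l • p) := (le_div_iff₀ hl).1 (hmin₁ hl)
  have hchord : (1 - s) * H (l₁ • p) + s * H (l₂ • p) = m * l - 1 := by
    linear_combination (1 - s) * hm₁ + s * hm₂
  rw [hpt]
  linarith

theorem eq_of_isMinOn (hconv : ConvexOn ℝ univ H) (hrad : RadStrictConvex H) {l₁ l₂ : ℝ}
    (hl₁ : 0 < l₁) (hl₂ : 0 < l₂) (hmin₁ : IsMinOn (ratio H p) (Ioi 0) l₁)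
    (hmin₂ : IsMinOn (ratio H p) (Ioi 0) l₂) (hpos : 0 < H (l₂ • p)) : l₁ = l₂ := by
  have hconst := hrad _ _ (affine_on_segment_of_isMinOn hconv hl₁ hl₂ hmin₁ hmin₂) hpos 0
    ⟨le_rfl, zero_le_one⟩
  simp only [sub_zero, one_smul, zero_smul, add_zero] at hconst
  have heq := ratio_eq_of_isMinOn hl₁ hl₂ hmin₁ hmin₂
  rw [ratio, ratio, hconst, div_eq_div_iff hl₁.ne' hl₂.ne'] at heq
  exact (mul_left_cancel₀ (by linarith) heq).symm

end BurningVelocity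

open BurningVelocity in
theorem statement4_general {n : ℕ} (H : EuclideanSpace ℝ (Fin n) → ℝ)
    (hconv : ConvexOn ℝ Set.univ H)
    (hgrow : ∀ p, H p ≥ ‖p‖ ^ 2) (hrad : RadStrictConvex H) :
    ∀ p : EuclideanSpace ℝ (Fin n), p ≠ 0 →
      ∃! l : ℝ, 0 < l ∧ (1 + H (l • p)) / l = effAlpha H p := by
  intro p hp
  have hH : ∀ q, 0 ≤ H q := fun q => (sq_nonneg _).trans (hgrow q)
  obtain ⟨l₀, hl₀, hmin₀⟩ := exists_isMinOn_Ioi_of_tendsto_atTop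
    (continuousOn_ratio (continuousOn_univ.1 (hconv.continuousOn isOpen_univ)))
    (tendsto_ratio_nhdsGT_zero hH) (tendsto_ratio_atTop hgrow hp)
  have hα := effAlpha_eq_of_isMinOn hl₀ hmin₀
  refine ⟨l₀, ⟨hl₀, hα.symm⟩, fun l ⟨hl, hlα⟩ => ?_⟩
  have hmin : IsMinOn (ratio H p) (Ioi 0) l := fun x hx =>
    (show ratio H p l = ratio H p l₀ from hlα.trans hα).le.trans (hmin₀ hx)
  have hpos : 0 < H (l₀ • p) :=
    (pow_pos (norm_pos_iff.2 (smul_ne_zero hl₀.ne' hp)) 2).trans_le (hgrow _)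
  exact eq_of_isMinOn hconv hrad hl hl₀ hmin hmin₀ hpos

/-- For convex `H` with `H(0) = 0`, `H(p) ≥ |p|²`, radially strictly
convex, and any `p ≠ 0`, there is a unique `λ_p > 0` attaining the infimum defining
`α(p)`. -/
theorem statement4 {n : ℕ} (hn : 1 ≤ n) (H : EuclideanSpace ℝ (Fin n) → ℝ)
    (hconv : ConvexOn ℝ Set.univ H) (h0 : H 0 = 0)
    (hgrow : ∀ p, H p ≥ ‖p‖ ^ 2) (hrad : RadStrictConvex H) :
    ∀ p : EuclideanSpace ℝ (Fin n), p ≠ 0 →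
      ∃! l : ℝ, 0 < l ∧ (1 + H (l • p)) / l = effAlpha H p :=
  statement4_general H hconv hgrow hrad
end

section
/- Let n ≥ 1 and let H : ℝⁿ → ℝ be convex with H(0) = 0 and H(p) ≥ |p|² for all p, and assume H is radially strictly convex. Define α(p) := inf_{λ>0} (1 + H(λp))/λ, and for p ≠ 0 let λ_p > 0 denote the unique minimizer of λ ↦ (1 + H(λp))/λ over λ > 0. Suppose p, p' ∈ ℝⁿ are distinct, and α(z) = 1 for every z on the line segment [p, p']. Then λ_p = λ_{p'}, and H(z) = λ_p − 1 for every z on the line segment [λ_p p, λ_p p']. -/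
/-- Let `H` be convex with `H(0) = 0`, `H(p) ≥ |p|²`, radially strictly
convex.  If `p ≠ p'`, `λ_p, λ_{p'} > 0` are the minimizers defining `α(p)`, `α(p')`,
and `α ≡ 1` on the segment `[p, p']`, then `λ_p = λ_{p'}` and `H ≡ λ_p − 1` on the
segment `[λ_p p, λ_p p']`. -/
theorem statement9 {n : ℕ} (hn : 1 ≤ n) (H : EuclideanSpace ℝ (Fin n) → ℝ)
    (hconv : ConvexOn ℝ Set.univ H) (h0 : H 0 = 0)
    (hgrow : ∀ p, H p ≥ ‖p‖ ^ 2) (hrad : RadStrictConvex H)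
    (p p' : EuclideanSpace ℝ (Fin n)) (hne : p ≠ p')
    (lam lam' : ℝ) (hlam : 0 < lam) (hlam' : 0 < lam')
    (hmin : (1 + H (lam • p)) / lam = effAlpha H p)
    (hmin' : (1 + H (lam' • p')) / lam' = effAlpha H p')
    (hseg : ∀ s ∈ Set.Icc (0:ℝ) 1, effAlpha H ((1 - s) • p + s • p') = 1) :
    lam = lam' ∧
      ∀ s ∈ Set.Icc (0:ℝ) 1, H ((1 - s) • (lam • p) + s • (lam • p')) = lam - 1 := by
  have hH0 : ∀ q, 0 ≤ H q := fun q => le_trans (sq_nonneg _) (hgrow q)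
  have hbdd : ∀ z : EuclideanSpace ℝ (Fin n),
      BddBelow {y : ℝ | ∃ l : ℝ, 0 < l ∧ (1 + H (l • z)) / l = y} := by
    intro z
    refine ⟨0, ?_⟩
    rintro y ⟨l, hl, rfl⟩
    have := hH0 (l • z)
    apply div_nonneg <;> linarith
  have key : ∀ z : EuclideanSpace ℝ (Fin n), effAlpha H z = 1 →
      ∀ μ : ℝ, 0 < μ → μ - 1 ≤ H (μ • z) := by
    intro z hz μ hμ
    have h1 : effAlpha H z ≤ (1 + H (μ • z)) / μ := csInf_le (hbdd z) ⟨μ, hμ, rfl⟩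
    rw [hz, le_div_iff₀ hμ] at h1
    linarith
  have hp1 : effAlpha H p = 1 := by
    have := hseg 0 ⟨le_refl 0, zero_le_one⟩
    simpa using this
  have hp'1 : effAlpha H p' = 1 := by
    have := hseg 1 ⟨zero_le_one, le_refl 1⟩
    simpa using this
  have hHlam : H (lam • p) = lam - 1 := by
    rw [hp1, div_eq_one_iff_eq hlam.ne'] at hmin
    linarith
  have hHlam' : H (lam' • p') = lam' - 1 := by
    rw [hp'1, div_eq_one_iff_eq hlam'.ne'] at hmin'
    linarith
  -- H is affine on the segment [lam • p, lam' • p']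
  have haff : ∀ s ∈ Set.Icc (0:ℝ) 1,
      H ((1 - s) • (lam • p) + s • (lam' • p')) = (1 - s) * (lam - 1) + s * (lam' - 1) := by
    rintro s ⟨hs0, hs1⟩
    have hle : H ((1 - s) • (lam • p) + s • (lam' • p'))
        ≤ (1 - s) * (lam - 1) + s * (lam' - 1) := by
      have := hconv.2 (Set.mem_univ (lam • p)) (Set.mem_univ (lam' • p'))
        (by linarith : (0:ℝ) ≤ 1 - s) hs0 (by ring)
      rw [hHlam, hHlam'] at this
      exact this
    have hμpos : 0 < (1 - s) * lam + s * lam' := by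
      rcases eq_or_lt_of_le hs1 with h | h
      · subst h; norm_num; exact hlam'
      · have h1 : 0 < (1 - s) * lam := mul_pos (by linarith) hlam
        nlinarith [mul_nonneg hs0 hlam'.le]
    set μ : ℝ := (1 - s) * lam + s * lam' with hμdef
    have hμne : μ ≠ 0 := hμpos.ne'
    set t : ℝ := s * lam' / μ with htdef
    have ht0 : 0 ≤ t := div_nonneg (mul_nonneg hs0 hlam'.le) hμpos.le
    have ht1 : t ≤ 1 := by
      rw [htdef, div_le_one hμpos]
      nlinarith [mul_nonneg (by linarith : (0:ℝ) ≤ 1 - s) hlam.le]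
    have hzseg : effAlpha H ((1 - t) • p + t • p') = 1 := hseg t ⟨ht0, ht1⟩
    have h1 : μ * t = s * lam' := by
      rw [htdef]; field_simp
    have h2 : μ * (1 - t) = (1 - s) * lam := by
      have : μ * (1 - t) = μ - μ * t := by ring
      rw [this, h1, hμdef]; ring
    have hpt : (1 - s) • (lam • p) + s • (lam' • p') = μ • ((1 - t) • p + t • p') := by
      rw [smul_add, smul_smul, smul_smul, smul_smul, smul_smul, h1, h2]
    have hge : μ - 1 ≤ H ((1 - s) • (lam • p) + s • (lam' • p')) := by
      rw [hpt]; exact key _ hzseg μ hμpos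
    have hμ1 : μ - 1 = (1 - s) * (lam - 1) + s * (lam' - 1) := by rw [hμdef]; ring
    linarith
  -- lam, lam' ≥ 1
  have hlamge : 1 ≤ lam := by
    have := hH0 (lam • p); linarith [hHlam]
  have hlamge' : 1 ≤ lam' := by
    have := hH0 (lam' • p'); linarith [hHlam']
  -- if lam = 1 then p = 0 (and similarly for lam')
  have hzero : ∀ (q : EuclideanSpace ℝ (Fin n)) (l : ℝ), 0 < l → H (l • q) = 0 → q = 0 := by
    intro q l hl hq
    have h1 : ‖l • q‖ ^ 2 ≤ 0 := by linarith [hgrow (l • q), hq]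
    have h2 : ‖l • q‖ = 0 := by nlinarith [norm_nonneg (l • q)]
    have h3 : l • q = 0 := norm_eq_zero.mp h2
    have := smul_eq_zero.mp h3
    rcases this with h | h
    · exact absurd h hl.ne'
    · exact h
  have heq : lam = lam' := by
    rcases eq_or_lt_of_le hlamge' with h1 | h1
    · -- lam' = 1, so p' = 0; then lam > 1 (else p = 0 = p')
      have hp'0 : p' = 0 := hzero p' lam' hlam' (by rw [hHlam']; linarith)
      rcases eq_or_lt_of_le hlamge with h2 | h2
      · exact absurd (by rw [hp'0, hzero p lam hlam (by rw [hHlam]; linarith)]) hne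
      · -- lam > 1; apply hrad in reversed direction
        have haffrev : ∀ s ∈ Set.Icc (0:ℝ) 1,
            H ((1 - s) • (lam' • p') + s • (lam • p))
              = (1 - s) * H (lam' • p') + s * H (lam • p) := by
          rintro s ⟨hs0, hs1⟩
          have := haff (1 - s) ⟨by linarith, by linarith⟩
          rw [hHlam, hHlam']
          rw [show (1 : ℝ) - (1 - s) = s by ring] at this
          rw [add_comm] at this
          rw [this]; ring
        have hpos : 0 < H (lam • p) := by rw [hHlam]; linarith
        have := hrad (lam' • p') (lam • p) haffrev hpos 0 ⟨le_refl 0, zero_le_one⟩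
        simp only [sub_zero, one_smul, zero_smul, add_zero] at this
        rw [hHlam, hHlam'] at this
        linarith
    · -- lam' > 1
      have hpos : 0 < H (lam' • p') := by rw [hHlam']; linarith
      have haff' : ∀ s ∈ Set.Icc (0:ℝ) 1,
          H ((1 - s) • (lam • p) + s • (lam' • p'))
            = (1 - s) * H (lam • p) + s * H (lam' • p') := by
        intro s hs
        rw [haff s hs, hHlam, hHlam']
      have := hrad (lam • p) (lam' • p') haff' hpos 0 ⟨le_refl 0, zero_le_one⟩
      simp only [sub_zero, one_smul, zero_smul, add_zero] at this
      rw [hHlam, hHlam'] at this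
      linarith
  subst heq
  refine ⟨rfl, ?_⟩
  intro s hs
  rw [haff s hs]; ring
end

section
/- Let α : ℝ² → ℝ be convex and positively homogeneous of degree 1 (α(sp) = s·α(p) for all s > 0 and p) with α(p) > 0 for every p ≠ 0. Fix t > 0 and define u(x) := sup_{|p| ≤ 1} (x·p − t·α(p)) − 1 for x ∈ ℝ². Then u(x) = 0 if and only if there exist p ∈ ℝ² with |p| = 1 and a subgradient q of α at p such that x = p + t·q. -/
open scoped RealInnerProductSpace

/-- `q` is a subgradient of `F` at `p`. -/
def IsSubgradient {n : ℕ} (F : EuclideanSpace ℝ (Fin n) → ℝ)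
    (p q : EuclideanSpace ℝ (Fin n)) : Prop :=
  ∀ y, F y ≥ F p + ⟪q, y - p⟫

/-!
The function `g(y) = ⟪x, y⟫ - t α(y)` is concave and positively homogeneous, hence superadditive.
If its maximum over the unit ball is `1`, homogeneity gives `g(y) ≤ ‖y‖` everywhere, and
the maximum is attained at a unit vector `p`. Superadditivity then gives
`1 + s g(y) ≤ g(p + s y) ≤ ‖p + s y‖ ≤ 1 + s ⟪p, y⟫ + s² ‖y‖² / 2` for `s > 0`, so
`g(y) ≤ ⟪p, y⟫`: the linear function `⟪p, ·⟫` supports `g` at `p`, which says exactly that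
`(x - p) / t` is a subgradient of `α` at `p`. The converse is a direct computation.
-/

open Metric Set Filter Topology

lemma IsCompact.sSup_eq_iff_isGreatest {X : Type*} [ConditionallyCompleteLinearOrder X]
    [TopologicalSpace X] [ClosedIciTopology X] {s : Set X} (hs : IsCompact s) (hne : s.Nonempty)
    {a : X} : sSup s = a ↔ IsGreatest s a :=
  ⟨fun h => h ▸ hs.isGreatest_sSup hne, IsGreatest.csSup_eq⟩

def PositivelyHomogeneous {E : Type*} [SMul ℝ E] (f : E → ℝ) : Prop :=
  ∀ s : ℝ, 0 < s → ∀ p, f (s • p) = s * f p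

namespace PositivelyHomogeneous

variable {E : Type*} [NormedAddCommGroup E] [InnerProductSpace ℝ E] {f : E → ℝ}

lemma map_zero (hf : PositivelyHomogeneous f) : f 0 = 0 := by
  have h := hf 2 two_pos 0
  rw [smul_zero] at h
  linarith

lemma map_add_le (hf : PositivelyHomogeneous f) (hconv : ConvexOn ℝ univ f) (a b : E) :
    f (a + b) ≤ f a + f b := by
  have hmid := hconv.2 (mem_univ a) (mem_univ b) (by norm_num : (0 : ℝ) ≤ 1 / 2)
    (by norm_num : (0 : ℝ) ≤ 1 / 2) (by norm_num)
  have e : a + b = (2 : ℝ) • ((1 / 2 : ℝ) • a + (1 / 2 : ℝ) • b) := by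
    rw [smul_add, smul_smul, smul_smul]; norm_num
  rw [e, hf 2 two_pos]
  simp only [smul_eq_mul] at hmid
  linarith

lemma le_norm_of_le_one_on_closedBall (hf : PositivelyHomogeneous f)
    (hle : ∀ y ∈ closedBall (0 : E) 1, f y ≤ 1) (y : E) : f y ≤ ‖y‖ := by
  rcases eq_or_ne y 0 with rfl | hy
  · simp [hf.map_zero]
  have hny : 0 < ‖y‖ := norm_pos_iff.mpr hy
  have hunit : ‖y‖⁻¹ • y ∈ closedBall (0 : E) 1 := by
    rw [mem_closedBall_zero_iff, norm_smul, norm_inv, norm_norm, inv_mul_cancel₀ hny.ne']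
  calc f y = ‖y‖ * f (‖y‖⁻¹ • y) := by
        rw [hf _ (inv_pos.mpr hny), ← mul_assoc, mul_inv_cancel₀ hny.ne', one_mul]
    _ ≤ ‖y‖ * 1 := mul_le_mul_of_nonneg_left (hle _ hunit) hny.le
    _ = ‖y‖ := mul_one _

lemma le_inner_of_le_norm (hf : PositivelyHomogeneous f) (hsup : ∀ a b, f a + f b ≤ f (a + b))
    (hle : ∀ y, f y ≤ ‖y‖) {p : E} (hp : ‖p‖ = 1) (hfp : f p = 1) (y : E) : f y ≤ ⟪p, y⟫ := by
  have hbound : ∀ s : ℝ, 0 < s → f y ≤ ⟪p, y⟫ + s * (‖y‖ ^ 2 / 2) := by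
    intro s hs
    have hnorm_sq : ‖p + s • y‖ ^ 2 = 1 + 2 * s * ⟪p, y⟫ + s ^ 2 * ‖y‖ ^ 2 := by
      rw [norm_add_sq_real, hp, inner_smul_right, norm_smul, Real.norm_of_nonneg hs.le]; ring
    have hchain : 1 + s * f y ≤ ‖p + s • y‖ := by
      rw [← hfp, ← hf s hs]
      exact (hsup p (s • y)).trans (hle _)
    nlinarith [sq_nonneg (‖p + s • y‖ - 1)]
  have hlim : Tendsto (fun s : ℝ => ⟪p, y⟫ + s * (‖y‖ ^ 2 / 2)) (𝓝[>] 0) (𝓝 ⟪p, y⟫) := by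
    have hcont : Continuous fun s : ℝ => ⟪p, y⟫ + s * (‖y‖ ^ 2 / 2) := by fun_prop
    simpa using tendsto_nhdsWithin_of_tendsto_nhds (hcont.tendsto 0)
  exact ge_of_tendsto hlim (eventually_nhdsWithin_of_forall hbound)

lemma isGreatest_image_closedBall_iff (hf : PositivelyHomogeneous f)
    (hsup : ∀ a b, f a + f b ≤ f (a + b)) :
    IsGreatest (f '' closedBall 0 1) 1 ↔ ∃ p, ‖p‖ = 1 ∧ f p = 1 ∧ ∀ y, f y ≤ ⟪p, y⟫ := by
  constructor
  · rintro ⟨⟨p, hp, hfp⟩, hmax⟩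
    have hle : ∀ y ∈ closedBall (0 : E) 1, f y ≤ 1 := fun y hy => hmax ⟨y, hy, rfl⟩
    have hle_norm := hf.le_norm_of_le_one_on_closedBall hle
    rw [mem_closedBall_zero_iff] at hp
    have hp1 : ‖p‖ = 1 := le_antisymm hp (hfp ▸ hle_norm p)
    exact ⟨p, hp1, hfp, hf.le_inner_of_le_norm hsup hle_norm hp1 hfp⟩
  · rintro ⟨p, hp, hfp, hsupp⟩
    refine ⟨⟨p, by simp [hp], hfp⟩, ?_⟩
    rintro _ ⟨y, hy, rfl⟩
    rw [mem_closedBall_zero_iff] at hy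
    calc f y ≤ ⟪p, y⟫ := hsupp y
      _ ≤ ‖p‖ * ‖y‖ := real_inner_le_norm p y
      _ ≤ 1 := by rw [hp, one_mul]; exact hy

end PositivelyHomogeneous

section Subgradient

variable {n : ℕ} {α : EuclideanSpace ℝ (Fin n) → ℝ} {p q : EuclideanSpace ℝ (Fin n)}

lemma isSubgradient_iff_of_positivelyHomogeneous (hα : PositivelyHomogeneous α) :
    IsSubgradient α p q ↔ ⟪q, p⟫ = α p ∧ ∀ y, ⟪q, y⟫ ≤ α y := by
  constructor
  · intro hq
    have hqp : ⟪q, p⟫ = α p := by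
      have h2 := hq ((2 : ℝ) • p)
      have h0 := hq 0
      rw [hα 2 two_pos, two_smul, add_sub_cancel_right] at h2
      rw [hα.map_zero, zero_sub, inner_neg_right] at h0
      linarith
    refine ⟨hqp, fun y => ?_⟩
    have hy := hq y
    rw [inner_sub_right, hqp] at hy
    linarith
  · rintro ⟨hqp, hle⟩ y
    rw [inner_sub_right, hqp]
    linarith [hle y]

lemma isSubgradient_iff_le_inner (hα : PositivelyHomogeneous α) {t : ℝ} (ht : 0 < t)
    (hp : ‖p‖ = 1) :
    IsSubgradient α p q ↔
      ⟪p + t • q, p⟫ - t * α p = 1 ∧ ∀ y, ⟪p + t • q, y⟫ - t * α y ≤ ⟪p, y⟫ := by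
  have hpp : ⟪p, p⟫ = 1 := by rw [real_inner_self_eq_norm_sq, hp, one_pow]
  simp only [isSubgradient_iff_of_positivelyHomogeneous hα, inner_add_left, inner_smul_left,
    hpp, RCLike.conj_to_real]
  refine and_congr ⟨fun h => by rw [h]; ring, fun h => ?_⟩
    (forall_congr' fun y => ⟨fun h => by nlinarith, fun h => ?_⟩)
  · exact (mul_left_cancel₀ ht.ne' (by linarith : t * ⟪q, p⟫ = t * α p))
  · exact le_of_mul_le_mul_left (by linarith) ht

end Subgradient

theorem statement10_general (α : EuclideanSpace ℝ (Fin 2) → ℝ)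
    (hconv : ConvexOn ℝ Set.univ α)
    (hhom : ∀ s : ℝ, 0 < s → ∀ p, α (s • p) = s * α p)
    (t : ℝ) (ht : 0 < t) (x : EuclideanSpace ℝ (Fin 2)) :
    (sSup {y : ℝ | ∃ p : EuclideanSpace ℝ (Fin 2), ‖p‖ ≤ 1 ∧ ⟪x, p⟫ - t * α p = y}
        - 1 = 0) ↔
      ∃ p q : EuclideanSpace ℝ (Fin 2),
        ‖p‖ = 1 ∧ IsSubgradient α p q ∧ x = p + t • q := by
  set g : EuclideanSpace ℝ (Fin 2) → ℝ := fun y => ⟪x, y⟫ - t * α y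
  have hS : {y : ℝ | ∃ p : EuclideanSpace ℝ (Fin 2), ‖p‖ ≤ 1 ∧ ⟪x, p⟫ - t * α p = y}
      = g '' closedBall 0 1 := by
    ext; simp [g]
  have hα_cont : Continuous α := continuousOn_univ.mp (hconv.continuousOn isOpen_univ)
  have hS_compact : IsCompact (g '' closedBall 0 1) :=
    (isCompact_closedBall 0 1).image (by fun_prop)
  have hg_hom : PositivelyHomogeneous g := fun s hs y => by
    simp only [g, inner_smul_right, hhom s hs]; ring
  have hg_sup : ∀ a b, g a + g b ≤ g (a + b) := fun a b => by
    simp only [g, inner_add_right]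
    nlinarith [PositivelyHomogeneous.map_add_le hhom hconv a b]
  rw [hS, sub_eq_zero, hS_compact.sSup_eq_iff_isGreatest ⟨g 0, 0, by simp, rfl⟩,
    hg_hom.isGreatest_image_closedBall_iff hg_sup]
  constructor
  · rintro ⟨p, hp, hsupport⟩
    have hx : x = p + t • (t⁻¹ • (x - p)) := by
      rw [smul_smul, mul_inv_cancel₀ ht.ne', one_smul, add_sub_cancel]
    refine ⟨p, t⁻¹ • (x - p), hp, ?_, hx⟩
    rwa [isSubgradient_iff_le_inner hhom ht hp, ← hx]
  · rintro ⟨p, q, hp, hq, rfl⟩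
    exact ⟨p, hp, (isSubgradient_iff_le_inner hhom ht hp).mp hq⟩

/-- Let `α : ℝ² → ℝ` be convex, positively homogeneous of degree one,
and positive away from `0`.  Fix `t > 0` and set
`u(x) = sup_{|p| ≤ 1} (x·p − t α(p)) − 1`.  Then `u(x) = 0` iff `x = p + t q` for
some unit vector `p` and some subgradient `q` of `α` at `p`. -/
theorem statement10 (α : EuclideanSpace ℝ (Fin 2) → ℝ)
    (hconv : ConvexOn ℝ Set.univ α)
    (hhom : ∀ s : ℝ, 0 < s → ∀ p, α (s • p) = s * α p)
    (hpos : ∀ p : EuclideanSpace ℝ (Fin 2), p ≠ 0 → 0 < α p)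
    (t : ℝ) (ht : 0 < t) (x : EuclideanSpace ℝ (Fin 2)) :
    (sSup {y : ℝ | ∃ p : EuclideanSpace ℝ (Fin 2), ‖p‖ ≤ 1 ∧ ⟪x, p⟫ - t * α p = y}
        - 1 = 0) ↔
      ∃ p q : EuclideanSpace ℝ (Fin 2),
        ‖p‖ = 1 ∧ IsSubgradient α p q ∧ x = p + t • q :=
  statement10_general α hconv hhom t ht x
end

section
/- Let n ≥ 1, let p ∈ ℝⁿ with |p| = 1, let a ∈ ℝ, K ≥ 0, and ε₀ ∈ (0,1]. For each ε ∈ (0, ε₀] let g_ε : ℝⁿ → ℝ be a convex function such that g_ε(q) ≥ |q|² for all q ∈ ℝⁿ and |g_ε(λp) − λ² − ε² a| ≤ K ε³ for all λ ∈ [1/2, 2]. Define α_ε(p) := inf_{λ>0} (1 + g_ε(λp))/λ. Then lim_{ε→0⁺} (α_ε(p) − 2)/ε² = a. -/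
set_option maxHeartbeats 1000000


/-- Let `|p| = 1` and, for each `ε ∈ (0, ε₀]`, let `g_ε` be convex with
`g_ε(q) ≥ |q|²` and `|g_ε(λp) − λ² − ε² a| ≤ K ε³` for `λ ∈ [1/2, 2]`.  Then
`(α_ε(p) − 2)/ε² → a` as `ε → 0⁺`, where `α_ε` is the effective burning velocity of
`g_ε`. -/
theorem statement12 {n : ℕ} (hn : 1 ≤ n) (p : EuclideanSpace ℝ (Fin n)) (hp : ‖p‖ = 1)
    (a K ε₀ : ℝ) (hK : 0 ≤ K) (hε₀ : ε₀ ∈ Set.Ioc (0:ℝ) 1)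
    (g : ℝ → EuclideanSpace ℝ (Fin n) → ℝ)
    (hgconv : ∀ ε ∈ Set.Ioc (0:ℝ) ε₀, ConvexOn ℝ Set.univ (g ε))
    (hglb : ∀ ε ∈ Set.Ioc (0:ℝ) ε₀, ∀ q, g ε q ≥ ‖q‖ ^ 2)
    (happrox : ∀ ε ∈ Set.Ioc (0:ℝ) ε₀, ∀ l ∈ Set.Icc (1/2 : ℝ) 2,
      |g ε (l • p) - l ^ 2 - ε ^ 2 * a| ≤ K * ε ^ 3) :
    Filter.Tendsto (fun ε => (effAlpha (g ε) p - 2) / ε ^ 2)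
      (nhdsWithin 0 (Set.Ioi 0)) (nhds a) := by
  obtain ⟨hε₀0, hε₀1⟩ := hε₀
  obtain ⟨C, hCdef⟩ : ∃ C : ℝ, C = K + (|a| + K) ^ 2 + 1 := ⟨_, rfl⟩
  have hX : (0:ℝ) < 2 * (|a| + K) + 2 := by positivity
  set δ : ℝ := min ε₀ (1 / (2 * (|a| + K) + 2)) with hδdef
  have hδpos : 0 < δ := lt_min hε₀0 (by positivity)
  have key : ∀ ε ∈ Set.Ioo (0:ℝ) δ,
      a - C * ε ≤ (effAlpha (g ε) p - 2) / ε ^ 2 ∧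
      (effAlpha (g ε) p - 2) / ε ^ 2 ≤ a + C * ε := by
    rintro ε ⟨hε0, hεδ⟩
    have hεε₀ : ε ≤ ε₀ := le_of_lt (lt_of_lt_of_le hεδ (min_le_left _ _))
    have hε1 : ε ≤ 1 := hεε₀.trans hε₀1
    have hεsmall : ε ≤ 1 / (2 * (|a| + K) + 2) :=
      le_of_lt (lt_of_lt_of_le hεδ (min_le_right _ _))
    have hεX : ε * (2 * (|a| + K) + 2) ≤ 1 := (le_div_iff₀ hX).mp hεsmall
    have hmem : ε ∈ Set.Ioc (0:ℝ) ε₀ := ⟨hε0, hεε₀⟩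
    have hε2 : (0:ℝ) < ε ^ 2 := by positivity
    obtain ⟨c, hc⟩ : ∃ c : ℝ, c = ε ^ 2 * a - K * ε ^ 3 := ⟨_, rfl⟩
    have ha1 : a ≤ |a| := le_abs_self a
    have ha2 : -|a| ≤ a := neg_abs_le a
    have hcabs : |c| ≤ ε ^ 2 * (|a| + K) := by
      rw [abs_le]
      constructor <;> nlinarith [sq_nonneg ε, mul_nonneg (mul_nonneg hε0.le hε0.le) hK,
        mul_nonneg (mul_nonneg (mul_nonneg hε0.le hε0.le) hε0.le) hK,
        mul_nonneg (mul_nonneg hε0.le hε0.le) (abs_nonneg a),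
        mul_nonneg (mul_nonneg (mul_nonneg hε0.le hε0.le) (sub_nonneg.mpr hε1)) hK]
    have hchalf : |c| ≤ 1 / 2 := by
      have h1 : ε ^ 2 * (|a| + K) ≤ ε * (|a| + K) := by
        nlinarith [mul_nonneg (mul_nonneg hε0.le (sub_nonneg.mpr hε1)) (by positivity : (0:ℝ) ≤ |a| + K)]
      nlinarith
    have hcu : c ≤ 1 / 2 := (le_abs_self c).trans hchalf
    have hcl : -(1 / 2) ≤ c := (neg_le_neg hchalf).trans (neg_abs_le c)
    -- basic facts about the set
    have hnorm : ∀ l : ℝ, 0 < l → l ^ 2 ≤ g ε (l • p) := by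
      intro l hl
      have := hglb ε hmem (l • p)
      rwa [norm_smul, Real.norm_eq_abs, hp, mul_one, sq_abs] at this
    have hbdd : BddBelow {y : ℝ | ∃ l : ℝ, 0 < l ∧ (1 + g ε (l • p)) / l = y} := by
      refine ⟨2, ?_⟩
      rintro y ⟨l, hl, rfl⟩
      rw [le_div_iff₀ hl]
      nlinarith [hnorm l hl, sq_nonneg (l - 1)]
    have hne : {y : ℝ | ∃ l : ℝ, 0 < l ∧ (1 + g ε (l • p)) / l = y}.Nonempty :=
      ⟨(1 + g ε ((1:ℝ) • p)) / 1, 1, one_pos, rfl⟩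
    -- upper bound on effAlpha
    have h1mem : (1:ℝ) ∈ Set.Icc (1/2 : ℝ) 2 := by norm_num
    have happ1 := happrox ε hmem 1 h1mem
    rw [one_smul] at happ1
    have hg1 : g ε p ≤ 1 + ε ^ 2 * a + K * ε ^ 3 := by
      have h := (abs_le.mp happ1).2
      nlinarith
    have hupper : effAlpha (g ε) p ≤ 2 + ε ^ 2 * a + K * ε ^ 3 := by
      have hle : effAlpha (g ε) p ≤ 1 + g ε p :=
        csInf_le hbdd ⟨1, one_pos, by rw [one_smul, div_one]⟩
      linarith
    -- lower bound on effAlpha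
    have hlower : 2 + c - c ^ 2 / 2 ≤ effAlpha (g ε) p := by
      apply le_csInf hne
      rintro y ⟨l, hl, rfl⟩
      rw [le_div_iff₀ hl]
      by_cases hIcc : l ∈ Set.Icc (1/2 : ℝ) 2
      · have happ := abs_le.mp (happrox ε hmem l hIcc)
        have hgl : l ^ 2 + c ≤ g ε (l • p) := by nlinarith [happ.1]
        have hl2 : (1:ℝ)/2 ≤ l := hIcc.1
        nlinarith [sq_nonneg (l - 1 - c / 2), mul_nonneg (sq_nonneg c) (by linarith : (0:ℝ) ≤ 2 * l - 1)]
      · have hgl := hnorm l hl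
        rcases not_and_or.mp (Set.mem_Icc.not.mp hIcc) with h | h
        · push_neg at h
          have hf : (0:ℝ) ≤ (1 - 2 * l) * (2 - l) := by
            apply mul_nonneg <;> linarith
          nlinarith [mul_nonneg (by nlinarith : (0:ℝ) ≤ 1/2 - c + c ^ 2 / 2) hl.le]
        · push_neg at h
          have hf : (0:ℝ) ≤ (2 * l - 1) * (l - 2) := by
            apply mul_nonneg <;> linarith
          nlinarith [mul_nonneg (by nlinarith : (0:ℝ) ≤ 1/2 - c + c ^ 2 / 2) hl.le]
    constructor
    · rw [le_div_iff₀ hε2]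
      have hc2 : c ^ 2 ≤ (ε ^ 2 * (|a| + K)) ^ 2 := by
        rw [← sq_abs c]
        exact pow_le_pow_left₀ (abs_nonneg c) hcabs 2
      have he4 : (ε ^ 2 * (|a| + K)) ^ 2 ≤ 2 * ((|a| + K) ^ 2 + 1) * ε ^ 3 := by
        nlinarith [mul_nonneg (mul_nonneg (mul_nonneg hε0.le hε0.le) (mul_nonneg hε0.le (sub_nonneg.mpr hε1))) (sq_nonneg (|a| + K)),
          pow_pos hε0 3, sq_nonneg (|a| + K)]
      have hCe : C * ε * ε ^ 2 = K * ε ^ 3 + ((|a| + K) ^ 2 + 1) * ε ^ 3 := by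
        rw [hCdef]; ring
      linarith [hlower, hc2, he4, hCe, hc]
    · rw [div_le_iff₀ hε2]
      have hCK : K * ε ^ 3 ≤ C * ε * ε ^ 2 := by
        rw [hCdef]
        nlinarith [pow_pos hε0 3, mul_nonneg (pow_pos hε0 3).le (sq_nonneg (|a| + K))]
      linarith [hupper, hCK]
  have hmemf : Set.Ioo (0:ℝ) δ ∈ nhdsWithin 0 (Set.Ioi 0) :=
    Ioo_mem_nhdsGT_of_mem ⟨le_refl 0, hδpos⟩
  have hlowE : ∀ᶠ ε in nhdsWithin (0:ℝ) (Set.Ioi 0),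
      a - C * ε ≤ (effAlpha (g ε) p - 2) / ε ^ 2 :=
    Filter.eventually_of_mem hmemf fun ε hε => (key ε hε).1
  have hhighE : ∀ᶠ ε in nhdsWithin (0:ℝ) (Set.Ioi 0),
      (effAlpha (g ε) p - 2) / ε ^ 2 ≤ a + C * ε :=
    Filter.eventually_of_mem hmemf fun ε hε => (key ε hε).2
  have h1 : Filter.Tendsto (fun ε : ℝ => a - C * ε) (nhdsWithin 0 (Set.Ioi 0)) (nhds a) := by
    have : Filter.Tendsto (fun ε : ℝ => a - C * ε) (nhds 0) (nhds (a - C * 0)) :=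
      Filter.Tendsto.sub tendsto_const_nhds (Filter.Tendsto.mul tendsto_const_nhds Filter.tendsto_id)
    simpa using this.mono_left nhdsWithin_le_nhds
  have h2 : Filter.Tendsto (fun ε : ℝ => a + C * ε) (nhdsWithin 0 (Set.Ioi 0)) (nhds a) := by
    have : Filter.Tendsto (fun ε : ℝ => a + C * ε) (nhds 0) (nhds (a + C * 0)) :=
      Filter.Tendsto.add tendsto_const_nhds (Filter.Tendsto.mul tendsto_const_nhds Filter.tendsto_id)
    simpa using this.mono_left nhdsWithin_le_nhds
  exact tendsto_of_tendsto_of_tendsto_of_le_of_le' h1 h2 hlowE hhighE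
end

section
/- Let K : ℝ² → ℝ be continuously differentiable and let V := (−∂K/∂x₂, ∂K/∂x₁). Let τ > 0, A ∈ ℝ, t₁ < t₂, and let ξ : [t₁, t₂] → ℝ² be continuously differentiable with |∇K(ξ(t))| ≤ τ for every t ∈ [t₁, t₂]. Then ∫_{t₁}^{t₂} |ξ'(t) − A·V(ξ(t))|² dt ≥ (K(ξ(t₂)) − K(ξ(t₁)))² / (τ² (t₂ − t₁)). -/
/-!
Since `∇K ⊥ V`, the derivative of `K ∘ ξ` is `⟪∇K(ξ), ξ'⟫ = ⟪∇K(ξ), ξ' - A • V(ξ)⟫`, which is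
at most `τ ‖ξ' - A • V(ξ)‖` in absolute value. Integrating and applying Cauchy–Schwarz in `t`
gives `(K(ξ t₂) - K(ξ t₁))² ≤ (t₂ - t₁) τ² ∫ ‖ξ' - A • V(ξ)‖²`.
-/

open MeasureTheory InnerProductSpace Set

theorem sq_intervalIntegral_le_mul_intervalIntegral_sq {a b : ℝ} (hab : a ≤ b) {f : ℝ → ℝ}
    (hf : IntervalIntegrable f volume a b)
    (hf2 : IntervalIntegrable (fun t => f t ^ 2) volume a b) :
    (∫ t in a..b, f t) ^ 2 ≤ (b - a) * ∫ t in a..b, f t ^ 2 := by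
  -- the quadratic `c ↦ ∫ (c - f)²` is nonnegative, so its discriminant is nonpositive
  have hquad : ∀ c : ℝ, 0 ≤ (b - a) * (c * c) + (-2 * ∫ t in a..b, f t) * c
      + ∫ t in a..b, f t ^ 2 := fun c => by
    have hexpand : ∫ t in a..b, (c - f t) ^ 2
        = (b - a) * (c * c) + (-2 * ∫ t in a..b, f t) * c + ∫ t in a..b, f t ^ 2 := by
      have hsplit : (fun t => (c - f t) ^ 2) = fun t => c * c - 2 * c * f t + f t ^ 2 := by
        funext t; ring
      rw [hsplit, intervalIntegral.integral_add (intervalIntegrable_const.sub (hf.const_mul _)) hf2,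
        intervalIntegral.integral_sub intervalIntegrable_const (hf.const_mul _),
        intervalIntegral.integral_const, intervalIntegral.integral_const_mul, smul_eq_mul]
      ring
    exact hexpand ▸ intervalIntegral.integral_nonneg hab fun t _ => sq_nonneg _
  have hdisc := discrim_le_zero hquad
  rw [discrim] at hdisc
  linarith

section

variable {E : Type*} [NormedAddCommGroup E] [InnerProductSpace ℝ E] [CompleteSpace E]

theorem ContDiff.continuous_gradient {K : E → ℝ} (hK : ContDiff ℝ 1 K) :
    Continuous (gradient K) :=
  (toDual ℝ E).symm.continuous.comp (hK.continuous_fderiv one_ne_zero)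

theorem HasGradientAt.hasDerivAt_comp {K : E → ℝ} {g : E} {γ : ℝ → E} {v : E} {t : ℝ}
    (hK : HasGradientAt K g (γ t)) (hγ : HasDerivAt γ v t) :
    HasDerivAt (fun s => K (γ s)) (inner ℝ g v) t := by
  simpa [toDual_apply_apply, Function.comp_def] using hK.hasFDerivAt.comp_hasDerivAt t hγ

theorem sq_sub_le_intervalIntegral_norm_sq_mul {K : E → ℝ} (hK : ContDiff ℝ 1 K) {τ a b : ℝ}
    (hab : a ≤ b) {γ γ' u : ℝ → E} (hγ : ∀ t ∈ Icc a b, HasDerivAt γ (γ' t) t)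
    (hu : ContinuousOn u (Icc a b))
    (horth : ∀ t ∈ Icc a b, inner ℝ (gradient K (γ t)) (γ' t - u t) = 0)
    (hgrad : ∀ t ∈ Icc a b, ‖gradient K (γ t)‖ ≤ τ) :
    (K (γ b) - K (γ a)) ^ 2 ≤ (∫ t in a..b, ‖u t‖ ^ 2) * (τ ^ 2 * (b - a)) := by
  rw [← uIcc_of_le hab] at hγ hu horth hgrad
  set h : ℝ → ℝ := fun t => inner ℝ (gradient K (γ t)) (u t)
  have hγc : ContinuousOn γ (uIcc a b) := fun t ht => (hγ t ht).continuousAt.continuousWithinAt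
  have hh : ContinuousOn h (uIcc a b) := (hK.continuous_gradient.comp_continuousOn hγc).inner hu
  have hKγ : ∀ t ∈ uIcc a b, HasDerivAt (fun s => K (γ s)) (h t) t := fun t ht => by
    have hγu : inner ℝ (gradient K (γ t)) (γ' t) = h t := by
      simpa only [inner_sub_right, sub_eq_zero] using horth t ht
    exact hγu ▸ ((hK.differentiable one_ne_zero _).hasGradientAt.hasDerivAt_comp (hγ t ht))
  have hle : ∀ t ∈ Icc a b, h t ^ 2 ≤ τ ^ 2 * ‖u t‖ ^ 2 := fun t ht => by
    have habs : |h t| ≤ τ * ‖u t‖ :=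
      (abs_real_inner_le_norm _ _).trans
        (mul_le_mul_of_nonneg_right (hgrad t (uIcc_of_le hab ▸ ht)) (norm_nonneg _))
    simpa only [sq_abs, mul_pow] using pow_le_pow_left₀ (abs_nonneg _) habs 2
  calc (K (γ b) - K (γ a)) ^ 2 = (∫ t in a..b, h t) ^ 2 := by
        rw [intervalIntegral.integral_eq_sub_of_hasDerivAt hKγ hh.intervalIntegrable]
    _ ≤ (b - a) * ∫ t in a..b, h t ^ 2 :=
        sq_intervalIntegral_le_mul_intervalIntegral_sq hab hh.intervalIntegrable
          (hh.pow 2).intervalIntegrable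
    _ ≤ (b - a) * ∫ t in a..b, τ ^ 2 * ‖u t‖ ^ 2 := by
        gcongr
        exact intervalIntegral.integral_mono_on hab (hh.pow 2).intervalIntegrable
          ((hu.norm.pow 2).intervalIntegrable.const_mul _) hle
    _ = (∫ t in a..b, ‖u t‖ ^ 2) * (τ ^ 2 * (b - a)) := by
        rw [intervalIntegral.integral_const_mul]; ring

end

theorem EuclideanSpace.inner_eq_zero_of_rotation {v w : EuclideanSpace ℝ (Fin 2)}
    (h0 : w 0 = -v 1) (h1 : w 1 = v 0) : inner ℝ v w = 0 := by
  simp [PiLp.inner_apply, Fin.sum_univ_two, h0, h1, mul_comm]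

theorem EuclideanSpace.continuous_of_forall_continuous_apply {X : Type*} [TopologicalSpace X]
    {n : ℕ} {f : X → EuclideanSpace ℝ (Fin n)} (hf : ∀ i, Continuous fun x => f x i) :
    Continuous f :=
  (PiLp.continuous_toLp 2 _).comp (continuous_pi hf)

theorem statement15_general (K : EuclideanSpace ℝ (Fin 2) → ℝ) (hK : ContDiff ℝ 1 K)
    (V : EuclideanSpace ℝ (Fin 2) → EuclideanSpace ℝ (Fin 2))
    (hV : ∀ y, V y 0 = -(gradient K y 1) ∧ V y 1 = gradient K y 0)
    (τ A t₁ t₂ : ℝ) (ht : t₁ < t₂)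
    (ξ ξ' : ℝ → EuclideanSpace ℝ (Fin 2))
    (hderiv : ∀ t ∈ Set.Icc t₁ t₂, HasDerivAt ξ (ξ' t) t)
    (hcont : ContinuousOn ξ' (Set.Icc t₁ t₂))
    (hgrad : ∀ t ∈ Set.Icc t₁ t₂, ‖gradient K (ξ t)‖ ≤ τ) :
    (∫ t in t₁..t₂, ‖ξ' t - A • V (ξ t)‖ ^ 2)
      ≥ (K (ξ t₂) - K (ξ t₁)) ^ 2 / (τ ^ 2 * (t₂ - t₁)) := by
  have hVc : Continuous V := by
    have hgc := hK.continuous_gradient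
    refine EuclideanSpace.continuous_of_forall_continuous_apply <| Fin.forall_fin_two.2 ⟨?_, ?_⟩
    · exact ((PiLp.continuous_apply 2 _ 1).comp hgc).neg.congr fun y => (hV y).1.symm
    · exact ((PiLp.continuous_apply 2 _ 0).comp hgc).congr fun y => (hV y).2.symm
  have hξc : ContinuousOn ξ (Icc t₁ t₂) := fun t ht =>
    (hderiv t ht).continuousAt.continuousWithinAt
  refine div_le_of_le_mul₀ (mul_nonneg (sq_nonneg τ) (sub_nonneg.2 ht.le))
    (intervalIntegral.integral_nonneg ht.le fun t _ => sq_nonneg _)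
    (sq_sub_le_intervalIntegral_norm_sq_mul hK ht.le hderiv
      (hcont.sub ((hVc.comp_continuousOn hξc).const_smul A)) (fun t _ => ?_) hgrad)
  simp only [sub_sub_cancel, inner_smul_right,
    EuclideanSpace.inner_eq_zero_of_rotation (hV _).1 (hV _).2, mul_zero]

/-- Let `K : ℝ² → ℝ` be `C¹` and `V = (−∂K/∂x₂, ∂K/∂x₁)`.  If
`ξ : [t₁, t₂] → ℝ²` is `C¹` with derivative `ξ'` and `|∇K(ξ(t))| ≤ τ` on `[t₁, t₂]`,
then `∫_{t₁}^{t₂} |ξ'(t) − A V(ξ(t))|² dt ≥ (K(ξ(t₂)) − K(ξ(t₁)))² / (τ²(t₂ − t₁))`. -/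
theorem statement15 (K : EuclideanSpace ℝ (Fin 2) → ℝ) (hK : ContDiff ℝ 1 K)
    (V : EuclideanSpace ℝ (Fin 2) → EuclideanSpace ℝ (Fin 2))
    (hV : ∀ y, V y 0 = -(gradient K y 1) ∧ V y 1 = gradient K y 0)
    (τ A t₁ t₂ : ℝ) (hτ : 0 < τ) (ht : t₁ < t₂)
    (ξ ξ' : ℝ → EuclideanSpace ℝ (Fin 2))
    (hderiv : ∀ t ∈ Set.Icc t₁ t₂, HasDerivAt ξ (ξ' t) t)
    (hcont : ContinuousOn ξ' (Set.Icc t₁ t₂))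
    (hgrad : ∀ t ∈ Set.Icc t₁ t₂, ‖gradient K (ξ t)‖ ≤ τ) :
    (∫ t in t₁..t₂, ‖ξ' t - A • V (ξ t)‖ ^ 2)
      ≥ (K (ξ t₂) - K (ξ t₁)) ^ 2 / (τ ^ 2 * (t₂ - t₁)) :=
  statement15_general K hK V hV τ A t₁ t₂ ht ξ ξ' hderiv hcont hgrad
end

section
/- Let K : ℝ² → ℝ be continuously differentiable and let V := (−∂K/∂x₂, ∂K/∂x₁). Let τ > 0, c > 0, A ∈ ℝ, t₁ < t₂, and let ξ : [t₁, t₂] → ℝ² be continuously differentiable with |∇K(ξ(t))| ≤ τ for every t ∈ [t₁, t₂]. Then ∫_{t₁}^{t₂} [ (1/4)|ξ'(t) − A·V(ξ(t))|² + c ] dt ≥ |K(ξ(t₂)) − K(ξ(t₁))| · √c / τ. -/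
/-!
Along `ξ` the derivative of `K ∘ ξ` is `⟪∇K(ξ), ξ'⟫ = ⟪∇K(ξ), ξ' - A V(ξ)⟫`, since `V ⊥ ∇K`.
Cauchy–Schwarz and the AM–GM inequality `√c · x ≤ x² / 4 + c` bound it pointwise by
`τ / √c` times the integrand, and integrating this bound controls `|K(ξ(t₂)) - K(ξ(t₁))|`.
-/

open Set Real InnerProductSpace

lemma inner_eq_zero_of_rotation {u v : EuclideanSpace ℝ (Fin 2)} (h₀ : v 0 = -u 1)
    (h₁ : v 1 = u 0) : ⟪u, v⟫_ℝ = 0 := by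
  simp only [PiLp.inner_apply, Fin.sum_univ_two, RCLike.inner_apply, conj_trivial, h₀, h₁]
  ring

lemma continuous_of_rotation {X : Type*} [TopologicalSpace X]
    {u v : X → EuclideanSpace ℝ (Fin 2)} (hu : Continuous u)
    (huv : ∀ y, v y 0 = -u y 1 ∧ v y 1 = u y 0) : Continuous v := by
  have hcoord (i : Fin 2) : Continuous fun y ↦ u y i := (PiLp.continuous_apply 2 _ i).comp hu
  refine (PiLp.continuous_toLp 2 _).comp (continuous_pi fun i ↦ ?_)
  fin_cases i
  · exact (hcoord 1).neg.congr fun y ↦ by simp [(huv y).1]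
  · exact (hcoord 0).congr fun y ↦ by simp [(huv y).2]

lemma ContDiff.continuous_gradient_s16 {E : Type*} [NormedAddCommGroup E] [InnerProductSpace ℝ E]
    [CompleteSpace E] {f : E → ℝ} (hf : ContDiff ℝ 1 f) : Continuous (gradient f) :=
  (toDual ℝ E).symm.continuous.comp (hf.continuous_fderiv one_ne_zero)

lemma sqrt_mul_le_sq_div_four_add {c : ℝ} (hc : 0 ≤ c) (x : ℝ) :
    √c * x ≤ 1 / 4 * x ^ 2 + c := by
  nlinarith [sq_nonneg (x / 2 - √c), sq_sqrt hc]

lemma abs_inner_le_of_inner_eq_zero {E : Type*} [NormedAddCommGroup E] [InnerProductSpace ℝ E]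
    {g v w : E} {τ c : ℝ} (A : ℝ) (hgv : ⟪g, v⟫_ℝ = 0) (hg : ‖g‖ ≤ τ) (hc : 0 < c) :
    |⟪g, w⟫_ℝ| ≤ τ / √c * (1 / 4 * ‖w - A • v‖ ^ 2 + c) := by
  have hw : ⟪g, w⟫_ℝ = ⟪g, w - A • v⟫_ℝ := by
    rw [inner_sub_right, inner_smul_right, hgv, mul_zero, sub_zero]
  rw [hw, div_mul_eq_mul_div, le_div_iff₀ (sqrt_pos.2 hc)]
  calc |⟪g, w - A • v⟫_ℝ| * √c ≤ τ * ‖w - A • v‖ * √c := by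
        gcongr
        exact (abs_real_inner_le_norm _ _).trans (by gcongr)
    _ = τ * (√c * ‖w - A • v‖) := by ring
    _ ≤ τ * (1 / 4 * ‖w - A • v‖ ^ 2 + c) := by
        gcongr
        · exact (norm_nonneg _).trans hg
        · exact sqrt_mul_le_sq_div_four_add hc.le _

/-- Let `K : ℝ² → ℝ` be `C¹` and `V = (−∂K/∂x₂, ∂K/∂x₁)`.  If
`ξ : [t₁, t₂] → ℝ²` is `C¹` with derivative `ξ'` and `|∇K(ξ(t))| ≤ τ` on `[t₁, t₂]`,
then for `c > 0`,
`∫_{t₁}^{t₂} [(1/4)|ξ'(t) − A V(ξ(t))|² + c] dt ≥ |K(ξ(t₂)) − K(ξ(t₁))| √c / τ`. -/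
theorem statement16 (K : EuclideanSpace ℝ (Fin 2) → ℝ) (hK : ContDiff ℝ 1 K)
    (V : EuclideanSpace ℝ (Fin 2) → EuclideanSpace ℝ (Fin 2))
    (hV : ∀ y, V y 0 = -(gradient K y 1) ∧ V y 1 = gradient K y 0)
    (τ c A t₁ t₂ : ℝ) (hτ : 0 < τ) (hc : 0 < c) (ht : t₁ < t₂)
    (ξ ξ' : ℝ → EuclideanSpace ℝ (Fin 2))
    (hderiv : ∀ t ∈ Set.Icc t₁ t₂, HasDerivAt ξ (ξ' t) t)
    (hcont : ContinuousOn ξ' (Set.Icc t₁ t₂))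
    (hgrad : ∀ t ∈ Set.Icc t₁ t₂, ‖gradient K (ξ t)‖ ≤ τ) :
    (∫ t in t₁..t₂, ((1/4) * ‖ξ' t - A • V (ξ t)‖ ^ 2 + c))
      ≥ |K (ξ t₂) - K (ξ t₁)| * Real.sqrt c / τ := by
  have hξ : ContinuousOn ξ (Icc t₁ t₂) := fun t hs ↦ (hderiv t hs).continuousAt.continuousWithinAt
  have hV_cont : Continuous V := continuous_of_rotation hK.continuous_gradient_s16 hV
  have hKξ (t) (hs : t ∈ Icc t₁ t₂) : HasDerivAt (K ∘ ξ) ⟪gradient K (ξ t), ξ' t⟫_ℝ t :=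
    (hK.differentiable one_ne_zero _).hasGradientAt.hasFDerivAt.comp_hasDerivAt t (hderiv t hs)
  have hint : IntervalIntegrable (fun t ↦ 1 / 4 * ‖ξ' t - A • V (ξ t)‖ ^ 2 + c)
      MeasureTheory.volume t₁ t₂ :=
    ContinuousOn.intervalIntegrable_of_Icc ht.le (by fun_prop)
  have key := norm_sub_le_integral_of_norm_deriv_le_of_le ht.le
    (fun t hs ↦ (hKξ t hs).continuousAt.continuousWithinAt)
    (fun t hs ↦ (hKξ t (Ioo_subset_Icc_self hs)).differentiableAt.differentiableWithinAt)
    (.of_forall fun t hs ↦ by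
      rw [(hKξ t (Ioo_subset_Icc_self hs)).deriv, Real.norm_eq_abs]
      exact abs_inner_le_of_inner_eq_zero A (inner_eq_zero_of_rotation (hV _).1 (hV _).2)
        (hgrad t (Ioo_subset_Icc_self hs)) hc)
    (hint.const_mul (τ / √c))
  rw [intervalIntegral.integral_const_mul, Real.norm_eq_abs, Function.comp_apply,
    Function.comp_apply] at key
  rw [ge_iff_le, div_le_iff₀ hτ]
  calc |K (ξ t₂) - K (ξ t₁)| * √c
      ≤ τ / √c * (∫ t in t₁..t₂, 1 / 4 * ‖ξ' t - A • V (ξ t)‖ ^ 2 + c) * √c := by gcongr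
    _ = (∫ t in t₁..t₂, 1 / 4 * ‖ξ' t - A • V (ξ t)‖ ^ 2 + c) * τ := by
      field_simp [(sqrt_pos.2 hc).ne']
end

section
/- Let n ≥ 1, M ≥ 0, and let H : ℝⁿ → ℝ be convex with H(0) = 0 and |p|² ≤ H(p) ≤ |p|² + M|p| for all p ∈ ℝⁿ, and assume H is radially strictly convex. Then for every θ > 0 there exists μ > 0 such that for every p ∈ ℝⁿ with |p| ≥ θ and every subgradient q of H at p, one has q·p ≥ H(p) + μ. -/
/-! Testing a subgradient `q` at `p` against the point `p / 2` gives
`q·p ≥ H(p) + (H(p) - 2 H(p/2))`, so it suffices to bound the midpoint gap `H(p) - 2 H(p/2)`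
from below by a positive constant on `|p| ≥ θ`. The gap is nonnegative by convexity, and it
vanishes only if `H` is linear on `[0, p]`, which radial strict convexity forbids once
`H(p) ≥ |p|² > 0`. Being continuous, it has a positive minimum on each compact annulus
`θ ≤ |p| ≤ R`, while the quadratic bounds on `H` make it at least `|p|²/2 - M|p|` outside. -/

open scoped RealInnerProductSpace

open Set

noncomputable def halfGap {E : Type*} [AddCommGroup E] [Module ℝ E] (H : E → ℝ) (p : E) :
    ℝ :=
  H p - 2 * H ((1 / 2 : ℝ) • p)

section VectorSpace

variable {E : Type*} [AddCommGroup E] [Module ℝ E] {H : E → ℝ}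

theorem ConvexOn.map_smul_eq_of_map_half_smul (hconv : ConvexOn ℝ univ H) (h0 : H 0 = 0) {p : E}
    (hmid : H ((1 / 2 : ℝ) • p) = 1 / 2 * H p) {s : ℝ} (hs : s ∈ Icc (0 : ℝ) 1) :
    H (s • p) = s * H p := by
  set φ : ℝ → ℝ := fun t ↦ H (t • p) - t * H p
  -- Convexity gives `φ ≤ 0` on `[0, 1]`; as `φ` also vanishes at `1/2`,
  -- monotonicity of slopes gives `φ ≥ 0`.
  have hφ : ConvexOn ℝ univ φ :=
    (hconv.comp_linearMap (LinearMap.toSpanSingleton ℝ E p)).sub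
      ((LinearMap.smulRight LinearMap.id (H p)).concaveOn convex_univ)
  have hφ0 : φ 0 = 0 := by simp [φ, h0]
  have hφhalf : φ (1 / 2) = 0 := by simp only [φ, hmid]; ring
  have hφ1 : φ 1 = 0 := by simp [φ]
  have upper : φ s ≤ 0 := by
    have hs' : s ∈ segment ℝ 0 1 := by rwa [segment_eq_Icc zero_le_one]
    simpa [hφ0, hφ1] using hφ.le_on_segment (mem_univ 0) (mem_univ 1) hs'
  have lower : 0 ≤ φ s := by
    rcases le_or_gt s (1 / 2) with hs' | hs'
    · have := hφ.le_left_of_right_le'' (mem_univ s) (mem_univ 1) hs' (by norm_num)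
        (by rw [hφhalf, hφ1])
      rwa [hφhalf] at this
    · have := hφ.le_right_of_left_le'' (mem_univ 0) (mem_univ s) (by norm_num) hs'.le
        (by rw [hφhalf, hφ0])
      rwa [hφhalf] at this
  have : φ s = 0 := le_antisymm upper lower
  simp only [φ] at this
  linarith

theorem ConvexOn.halfGap_nonneg (hconv : ConvexOn ℝ univ H) (h0 : H 0 = 0) (p : E) :
    0 ≤ halfGap H p := by
  have := hconv.2 (mem_univ 0) (mem_univ p) (by norm_num : (0 : ℝ) ≤ 1 / 2)
    (by norm_num : (0 : ℝ) ≤ 1 / 2) (by norm_num)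
  simp only [smul_zero, zero_add, smul_eq_mul, h0, mul_zero] at this
  unfold halfGap
  linarith

end VectorSpace

theorem halfGap_ge_of_sq_le_of_le {E : Type*} [SeminormedAddCommGroup E] [NormedSpace ℝ E]
    {H : E → ℝ} {M : ℝ} (hbounds : ∀ p, ‖p‖ ^ 2 ≤ H p ∧ H p ≤ ‖p‖ ^ 2 + M * ‖p‖)
    (p : E) :
    ‖p‖ ^ 2 / 2 - M * ‖p‖ ≤ halfGap H p := by
  have hhalf := (hbounds ((1 / 2 : ℝ) • p)).2
  rw [norm_smul, Real.norm_of_nonneg (by norm_num)] at hhalf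
  unfold halfGap
  nlinarith [(hbounds p).1]

theorem ConvexOn.continuous_halfGap {E : Type*} [NormedAddCommGroup E] [NormedSpace ℝ E]
    [FiniteDimensional ℝ E] {H : E → ℝ} (hconv : ConvexOn ℝ univ H) :
    Continuous (halfGap H) := by
  have hH : Continuous H := continuousOn_univ.mp (hconv.continuousOn isOpen_univ)
  unfold halfGap
  fun_prop

theorem exists_pos_le_of_norm_ge {E : Type*} [NormedAddCommGroup E] [ProperSpace E]
    {G : E → ℝ} (hG : Continuous G) {θ R : ℝ} (hpos : ∀ p, θ ≤ ‖p‖ → 0 < G p)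
    (hfar : ∀ p, R ≤ ‖p‖ → 1 ≤ G p) :
    ∃ μ > 0, ∀ p, θ ≤ ‖p‖ → μ ≤ G p := by
  have hK : IsCompact ({p : E | θ ≤ ‖p‖} ∩ Metric.closedBall 0 R) :=
    (isCompact_closedBall 0 R).inter_left (isClosed_le continuous_const continuous_norm)
  obtain ⟨a, ha, haK⟩ := hK.exists_forall_le' hG.continuousOn fun p hp ↦ hpos p hp.1
  refine ⟨min a 1, lt_min ha one_pos, fun p hp ↦ ?_⟩
  rcases le_total ‖p‖ R with hR | hR
  · exact (min_le_left _ _).trans (haK p ⟨hp, by rwa [mem_closedBall_zero_iff]⟩)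
  · exact (min_le_right _ _).trans (hfar p hR)

section Euclidean

variable {n : ℕ} {H : EuclideanSpace ℝ (Fin n) → ℝ}

theorem IsSubgradient.add_halfGap_le_inner {p q : EuclideanSpace ℝ (Fin n)}
    (hq : IsSubgradient H p q) : H p + halfGap H p ≤ ⟪q, p⟫ := by
  have h := hq ((1 / 2 : ℝ) • p)
  rw [show (1 / 2 : ℝ) • p - p = (-(1 / 2) : ℝ) • p by module, real_inner_smul_right] at h
  unfold halfGap
  linarith

theorem RadStrictConvex.halfGap_pos (hrad : RadStrictConvex H) (hconv : ConvexOn ℝ univ H)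
    (h0 : H 0 = 0) {p : EuclideanSpace ℝ (Fin n)} (hp : 0 < H p) : 0 < halfGap H p := by
  refine (hconv.halfGap_nonneg h0 p).lt_of_ne fun hgap ↦ hp.ne ?_
  have hmid : H ((1 / 2 : ℝ) • p) = 1 / 2 * H p := by unfold halfGap at hgap; linarith
  have hlin : ∀ s ∈ Icc (0 : ℝ) 1, H ((1 - s) • 0 + s • p) = (1 - s) * H 0 + s * H p := by
    intro s hs
    simpa [h0] using hconv.map_smul_eq_of_map_half_smul h0 hmid hs
  simpa [h0] using hrad 0 p hlin hp 0 (left_mem_Icc.mpr zero_le_one)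

end Euclidean

theorem statement17_general {n : ℕ} (M : ℝ)
    (H : EuclideanSpace ℝ (Fin n) → ℝ) (hconv : ConvexOn ℝ Set.univ H)
    (h0 : H 0 = 0)
    (hbounds : ∀ p, ‖p‖ ^ 2 ≤ H p ∧ H p ≤ ‖p‖ ^ 2 + M * ‖p‖)
    (hrad : RadStrictConvex H) :
    ∀ θ > (0:ℝ), ∃ μ > (0:ℝ), ∀ p : EuclideanSpace ℝ (Fin n), ‖p‖ ≥ θ →
      ∀ q, IsSubgradient H p q → ⟪q, p⟫ ≥ H p + μ := by
  intro θ hθ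
  have hpos : ∀ p, θ ≤ ‖p‖ → 0 < halfGap H p := fun p hp ↦
    hrad.halfGap_pos hconv h0 ((pow_pos (hθ.trans_le hp) 2).trans_le (hbounds p).1)
  have hfar : ∀ p, max 2 (2 * M + 2) ≤ ‖p‖ → 1 ≤ halfGap H p := fun p hp ↦ by
    have := halfGap_ge_of_sq_le_of_le hbounds p
    nlinarith [le_max_left 2 (2 * M + 2), le_max_right 2 (2 * M + 2)]
  obtain ⟨μ, hμ, hμle⟩ := exists_pos_le_of_norm_ge hconv.continuous_halfGap hpos hfar
  exact ⟨μ, hμ, fun p hp q hq ↦ by linarith [hq.add_halfGap_le_inner, hμle p hp]⟩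

/-- Let `H` be convex with `H(0) = 0`, `|p|² ≤ H(p) ≤ |p|² + M|p|`, and
radially strictly convex.  Then for every `θ > 0` there is `μ > 0` such that
`q·p ≥ H(p) + μ` for all `|p| ≥ θ` and all subgradients `q` of `H` at `p`. -/
theorem statement17 {n : ℕ} (hn : 1 ≤ n) (M : ℝ) (hM : 0 ≤ M)
    (H : EuclideanSpace ℝ (Fin n) → ℝ) (hconv : ConvexOn ℝ Set.univ H)
    (h0 : H 0 = 0)
    (hbounds : ∀ p, ‖p‖ ^ 2 ≤ H p ∧ H p ≤ ‖p‖ ^ 2 + M * ‖p‖)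
    (hrad : RadStrictConvex H) :
    ∀ θ > (0:ℝ), ∃ μ > (0:ℝ), ∀ p : EuclideanSpace ℝ (Fin n), ‖p‖ ≥ θ →
      ∀ q, IsSubgradient H p q → ⟪q, p⟫ ≥ H p + μ :=
  statement17_general M H hconv h0 hbounds hrad
end
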